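/- arXiv:2510.09850 — 3 statements merged into one kernel-verified Lean document; each statement's English description precedes it below -/
import Mathlib

section
/- Let X be a sequential topological space, let (U_n) be a sequence of open subsets of X and let U be open. If U_n → U with respect to the Scott topology on the complete lattice 𝒪(X) of open sets, then U ⊆ ⋃_{k∈ℕ} interior(⋂_{n≥k} U_n). Conversely, if U ⊆ ⋃_{k∈ℕ} interior(⋂_{n≥k} U_n), then U_n → U with respect to the Scott topology on 𝒪(X). -/
/-!
In `𝒪(X)` the set `⋃ₖ interior (⋂_{n ≥ k} Uₙ)` is `liminf Uₙ`, the directed supremum of the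
opens that are eventually below `Uₙ`. If `V ≤ liminf Uₙ`, a Scott-open set containing `V`
contains this supremum, hence one of those opens, hence eventually every `Uₙ`.

Conversely, for compact `K` the family `{O | K ⊆ O}` is Scott open, so Scott convergence makes
every compact `K ⊆ V` eventually lie in `Uₙ`. Applied to a convergent sequence `zᵢ → y` (with
its limit) inside `V`, this puts the tail of the sequence in `⋂_{n ≥ m} Uₙ` for some `m`, while
the finitely many conditions `zᵢ ∈ Uₙ`, `k ≤ n < m`, hold eventually because `y ∈ Uₙ`. Hence
`V ∩ ⋂_{n ≥ k} Uₙ` is sequentially open, thus open since `X` is sequential, and these open sets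
cover `V`.
-/

open Filter Topology TopologicalSpace Set

theorem Topology.IsScott.tendsto_nhds_of_le_liminf {α β : Type*} [CompleteLattice α]
    [TopologicalSpace α] [IsScott α univ] {f : Filter β} {u : β → α} {a : α}
    (h : a ≤ liminf u f) : Tendsto u f (𝓝 a) := by
  refine tendsto_nhds.2 fun s hs has => ?_
  obtain ⟨hupper, hinacc⟩ := (isOpen_iff_isUpperSet_and_dirSupInaccOn (D := univ)).1 hs
  have hdir : DirectedOn (· ≤ ·) {b | ∀ᶠ n in f, b ≤ u n} := fun b hb c hc =>
    ⟨b ⊔ c, (hb.and hc).mono fun _ h => sup_le h.1 h.2, le_sup_left, le_sup_right⟩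
  obtain ⟨b, hb, hbs⟩ := hinacc (mem_univ _) ⟨⊥, .of_forall fun _ => bot_le⟩ hdir
    (isLUB_sSup _) (hupper (liminf_eq (u := u) ▸ h) has)
  exact hb.mono fun _ hn => hupper hn hbs

theorem isOpen_of_forall_tendsto_eventually_mem {X : Type*} [TopologicalSpace X]
    [SequentialSpace X] {s : Set X}
    (h : ∀ (x : ℕ → X) (a : X), Tendsto x atTop (𝓝 a) → a ∈ s → ∀ᶠ n in atTop, x n ∈ s) :
    IsOpen s :=
  isClosed_compl_iff.1 <| IsSeqClosed.isClosed fun x a hx hxa has =>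
    let ⟨n, hn⟩ := (h x a hxa has).exists
    hx n hn

namespace TopologicalSpace.Opens

variable {X : Type*} [TopologicalSpace X]

theorem coe_iInf₂ {ι : Sort*} {κ : ι → Sort*} (U : (i : ι) → κ i → Opens X) :
    ((⨅ (i) (j), U i j : Opens X) : Set X) = interior (⋂ (i) (j), (U i j : Set X)) :=
  Subset.antisymm
    (interior_maximal (subset_iInter₂ fun i j => iInf₂_le (f := U) i j) (Opens.isOpen _))
    (show Opens.interior _ ≤ _ from le_iInf₂ fun i j => interior_subset.trans (iInter₂_subset i j))

theorem coe_liminf_atTop (U : ℕ → Opens X) :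
    ((liminf U atTop : Opens X) : Set X) = ⋃ k, interior (⋂ n ≥ k, (U n : Set X)) := by
  simp only [liminf_eq_iSup_iInf_of_nat, coe_iSup, coe_iInf₂]

end TopologicalSpace.Opens

theorem IsCompact.isOpen_scott_setOf_subset {X : Type*} [TopologicalSpace X]
    {K : Set X} (hK : IsCompact K) :
    IsOpen[scott (Opens X) univ] {O : Opens X | K ⊆ O} := by
  let _ := scott (Opens X) univ
  have : IsScott (Opens X) univ := ⟨rfl⟩
  rw [IsScott.isOpen_iff_isUpperSet_and_dirSupInaccOn (D := univ)]
  refine ⟨fun O O' hle (hO : K ⊆ O) => hO.trans hle, fun d _ hd hdir O hlub hKO => ?_⟩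
  have hcover : K ⊆ ⋃ W : d, (W : Set X) := by
    have hKO : K ⊆ (sSup d : Opens X) := hlub.sSup_eq ▸ hKO
    simpa only [Opens.coe_sSup, iUnion_subtype] using hKO
  have := hd.to_subtype
  obtain ⟨W, hW⟩ := hK.elim_directed_cover _ (fun W => W.1.isOpen) hcover
    (directedOn_iff_directed.1 hdir)
  exact ⟨W, W.2, hW⟩

section ScottConvergence

variable {X : Type*} [TopologicalSpace X] {V : Opens X}

theorem eventually_subset_of_tendsto_scott {ι : Type*} {f : Filter ι} {U : ι → Opens X}
    (hU : Tendsto U f (@nhds _ (scott (Opens X) univ) V)) {K : Set X} (hK : IsCompact K)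
    (hKV : K ⊆ V) : ∀ᶠ i in f, K ⊆ U i :=
  hU <| @IsOpen.mem_nhds _ (scott (Opens X) univ) _ _ hK.isOpen_scott_setOf_subset hKV

variable [SequentialSpace X] {U : ℕ → Opens X}

theorem isOpen_inter_iInter_of_tendsto_scott
    (hU : Tendsto U atTop (@nhds _ (scott (Opens X) univ) V)) (k : ℕ) :
    IsOpen ((V : Set X) ∩ ⋂ n ≥ k, (U n : Set X)) := by
  refine isOpen_of_forall_tendsto_eventually_mem fun z y hz ⟨hyV, hyU⟩ => ?_
  obtain ⟨N, hN⟩ := eventually_atTop.1 (hz (V.isOpen.mem_nhds hyV))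
  have hK : IsCompact (insert y (z '' Ici N)) := by
    rw [← range_add_eq_image_Ici]
    exact ((tendsto_add_atTop_iff_nat N).2 hz).isCompact_insert_range
  obtain ⟨m, hm⟩ := eventually_atTop.1 <|
    eventually_subset_of_tendsto_scott hU hK (insert_subset hyV (image_subset_iff.2 hN))
  -- Beyond `m` the tail of `z` lies in every `U n`; below `m` only finitely many `n` remain.
  have hhead : ∀ᶠ i in atTop, ∀ n ∈ Finset.Ico k m, z i ∈ U n :=
    (eventually_all_finset _).2 fun n hn =>
      hz ((U n).isOpen.mem_nhds (mem_iInter₂.1 hyU n (Finset.mem_Ico.1 hn).1))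
  filter_upwards [eventually_ge_atTop N, hhead] with i hi hhead
  refine ⟨hN i hi, mem_iInter₂.2 fun n hn => ?_⟩
  rcases lt_or_ge n m with hnm | hmn
  · exact hhead n (Finset.mem_Ico.2 ⟨hn, hnm⟩)
  · exact hm n hmn (mem_insert_of_mem y (mem_image_of_mem z hi))

theorem le_liminf_of_tendsto_scott (hU : Tendsto U atTop (@nhds _ (scott (Opens X) univ) V)) :
    V ≤ liminf U atTop := by
  intro x hx
  obtain ⟨k, hk⟩ := eventually_atTop.1 <|
    eventually_subset_of_tendsto_scott hU isCompact_singleton (singleton_subset_iff.2 hx)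
  rw [← SetLike.mem_coe, Opens.coe_liminf_atTop, mem_iUnion]
  exact ⟨k, interior_maximal inter_subset_right (isOpen_inter_iInter_of_tendsto_scott hU k)
    ⟨hx, mem_iInter₂.2 fun n hn => singleton_subset_iff.1 (hk n hn)⟩⟩

end ScottConvergence

/-- Characterization of Scott convergence of open sets in a sequential space:
`U_n → U` in the Scott topology on the lattice of open sets if and only if
`U ⊆ ⋃_k interior (⋂_{n ≥ k} U_n)`. -/
theorem stmt_2 {X : Type*} [TopologicalSpace X] [SequentialSpace X]
    (U : ℕ → TopologicalSpace.Opens X) (V : TopologicalSpace.Opens X) :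
    Filter.Tendsto U Filter.atTop
        (@nhds _ (Topology.scott (TopologicalSpace.Opens X) Set.univ) V) ↔
      (V : Set X) ⊆ ⋃ k : ℕ, interior (⋂ n ∈ {n : ℕ | k ≤ n}, (U n : Set X)) := by
  let _ := scott (Opens X) univ
  have : IsScott (Opens X) univ := ⟨rfl⟩
  refine (Iff.intro le_liminf_of_tendsto_scott IsScott.tendsto_nhds_of_le_liminf).trans ?_
  rw [← SetLike.coe_subset_coe, Opens.coe_liminf_atTop]
  rfl
end

section
/- Let X be a set, Y a topological space, and B : Y → 𝒫(X) a family of subsets such that B^T : X → 𝒫(Y), x ↦ {y : x ∈ B_y}, takes open values. Equip X with the initial topology τ of the map B^T : X → 𝒪(Y), where 𝒪(Y) carries the compact-open topology generated by the base sets F_K = {U open in Y : K ⊆ U} for compact K ⊆ Y. Then τ coincides with the topology on X generated by the base consisting of X and the sets ⋂_{y∈K} B_y for compact K ⊆ Y. -/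
/-- The compact-open topology on the set of open subsets of `Y`. -/
def compactOpenTopOnOpens (Y : Type*) [TopologicalSpace Y] :
    TopologicalSpace {U : Set Y // IsOpen U} :=
  TopologicalSpace.generateFrom
    {S | ∃ K : Set Y, IsCompact K ∧ S = {U : {U : Set Y // IsOpen U} | K ⊆ U.1}}

theorem preimage_setOf_subset_eq_biInter {X Y : Type*} {P : Set Y → Prop} (B : Y → Set X)
    (hP : ∀ x : X, P {y : Y | x ∈ B y}) (K : Set Y) :
    (fun x : X => (⟨{y : Y | x ∈ B y}, hP x⟩ : Subtype P)) ⁻¹' {U | K ⊆ U.1} =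
      ⋂ y ∈ K, B y := by
  ext x
  simp only [Set.mem_preimage, Set.mem_iInter, Set.subset_def]
  rfl

theorem image_preimage_compactOpenBase {X Y : Type*} [TopologicalSpace Y] (B : Y → Set X)
    (hopen : ∀ x : X, IsOpen {y : Y | x ∈ B y}) :
    Set.preimage (fun x : X => (⟨{y : Y | x ∈ B y}, hopen x⟩ : {U : Set Y // IsOpen U})) ''
        {S | ∃ K : Set Y, IsCompact K ∧ S = {U : {U : Set Y // IsOpen U} | K ⊆ U.1}} =
      {T : Set X | ∃ K : Set Y, IsCompact K ∧ T = ⋂ y ∈ K, B y} := by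
  ext T
  constructor
  · rintro ⟨S, ⟨K, hK, rfl⟩, rfl⟩
    exact ⟨K, hK, preimage_setOf_subset_eq_biInter B hopen K⟩
  · rintro ⟨K, hK, rfl⟩
    exact ⟨_, ⟨K, hK, rfl⟩, preimage_setOf_subset_eq_biInter B hopen K⟩

/-- The initial topology of the transpose `B^T : X → 𝒪(Y)` with respect to the
compact-open topology on `𝒪(Y)` coincides with the topology generated by `X`
together with the sets `⋂_{y ∈ K} B_y` for compact `K ⊆ Y`. -/
theorem stmt_9 {X : Type*} {Y : Type*} [TopologicalSpace Y]
    (B : Y → Set X)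
    (hopen : ∀ x : X, IsOpen {y : Y | x ∈ B y}) :
    TopologicalSpace.induced
        (fun x : X => (⟨{y : Y | x ∈ B y}, hopen x⟩ : {U : Set Y // IsOpen U}))
        (compactOpenTopOnOpens Y) =
      TopologicalSpace.generateFrom
        ({Set.univ} ∪ {T : Set X | ∃ K : Set Y, IsCompact K ∧ T = ⋂ y ∈ K, B y}) := by
  rw [compactOpenTopOnOpens, induced_generateFrom_eq, image_preimage_compactOpenBase B hopen,
    Set.singleton_union, generateFrom_insert_univ]
end

section
/- Let X be a topological space, K a compact saturated subset of X, and 𝒦 a compact subset of the space K_-(X) of compact saturated subsets of X equipped with the upper Vietoris topology (generated by the base sets □U = {L : L ⊆ U} for U open). Then sat(⋃_{L∈𝒦} L) is a compact saturated subset of X, where sat denotes saturation (intersection of all open supersets). In particular, ⋃𝒦 is compact in X. -/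
/-!
A compact set of compact saturated sets behaves like a single compact set for directed open
covers: if `U` is a directed open cover of `⋃𝒦`, every `L ∈ 𝒦` lies in some `U i`, so the boxes
`□(U i)` form a directed open cover of `𝒦`, one of which contains all of `𝒦`; hence `⋃𝒦 ⊆ U i`.
Saturation preserves compactness because an open set containing `A` contains `sat A`.
-/

/-- The saturation of a set: the intersection of all its open supersets. -/
def satur {X : Type*} [TopologicalSpace X] (A : Set X) : Set X :=
  ⋂₀ {U : Set X | IsOpen U ∧ A ⊆ U}

/-- The space `K_-(X)` of compact saturated subsets of `X`. -/
def KSat (X : Type*) [TopologicalSpace X] : Type _ :=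
  {K : Set X // IsCompact K ∧ satur K = K}

/-- The upper Vietoris topology on `K_-(X)`, generated by the sets
`□U = {L : L ⊆ U}` for `U` open. -/
def upperVietorisTop (X : Type*) [TopologicalSpace X] : TopologicalSpace (KSat X) :=
  TopologicalSpace.generateFrom
    {S | ∃ U : Set X, IsOpen U ∧ S = {L : KSat X | L.1 ⊆ U}}

open Set Topology

universe u

variable {X : Type u} [TopologicalSpace X]

theorem isCompact_of_forall_directed_cover {s : Set X}
    (h : ∀ (ι : Type u) [Nonempty ι] (U : ι → Set X), (∀ i, IsOpen (U i)) →
      Directed (· ⊆ ·) U → s ⊆ ⋃ i, U i → ∃ i, s ⊆ U i) :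
    IsCompact s := by
  refine isCompact_of_finite_subcover fun U hUo hsU => ?_
  have hmono : Monotone fun t : Finset _ => ⋃ i ∈ t, U i :=
    fun t t' htt' => biUnion_subset_biUnion_left htt'
  refine h _ _ (fun t => isOpen_biUnion fun i _ => hUo i) hmono.directed_le ?_
  intro x hx
  obtain ⟨i, hi⟩ := mem_iUnion.1 (hsU hx)
  exact mem_iUnion.2 ⟨{i}, by simpa using hi⟩

theorem subset_satur (A : Set X) : A ⊆ satur A :=
  fun _ hx _ hU => hU.2 hx

theorem satur_subset_of_subset {A U : Set X} (hU : IsOpen U) (h : A ⊆ U) : satur A ⊆ U :=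
  fun _ hx => hx U ⟨hU, h⟩

theorem satur_satur (A : Set X) : satur (satur A) = satur A :=
  (subset_satur _).antisymm' fun _ hx U hU => hx U ⟨hU.1, satur_subset_of_subset hU.1 hU.2⟩

theorem IsCompact.satur {A : Set X} (hA : IsCompact A) : IsCompact (satur A) :=
  isCompact_of_forall_directed_cover fun _ _ U hUo hdir hAU =>
    (hA.elim_directed_cover U hUo ((subset_satur A).trans hAU) hdir).imp
      fun i hi => satur_subset_of_subset (hUo i) hi

theorem isOpen_upperVietoris_setOf_subset {U : Set X} (hU : IsOpen U) :
    IsOpen[upperVietorisTop X] {L : KSat X | L.1 ⊆ U} :=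
  TopologicalSpace.isOpen_generateFrom_of_mem ⟨U, hU, rfl⟩

theorem IsCompact.biUnion_of_upperVietoris {𝒦 : Set (KSat X)}
    (h𝒦 : @IsCompact _ (upperVietorisTop X) 𝒦) : IsCompact (⋃ L ∈ 𝒦, L.1) := by
  refine isCompact_of_forall_directed_cover fun ι _ U hUo hdir hcov => ?_
  let _ := upperVietorisTop X
  have hboxes : 𝒦 ⊆ ⋃ i, {L : KSat X | L.1 ⊆ U i} := fun L hL =>
    mem_iUnion.2 <| L.2.1.elim_directed_cover U hUo ((subset_biUnion_of_mem hL).trans hcov) hdir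
  have hdir_boxes : Directed (· ⊆ ·) fun i => {L : KSat X | L.1 ⊆ U i} :=
    hdir.mono_comp (g := fun V => {L : KSat X | L.1 ⊆ V}) _ fun _ _ h _ hL => hL.trans h
  obtain ⟨i, hi⟩ := h𝒦.elim_directed_cover _
    (fun i => isOpen_upperVietoris_setOf_subset (hUo i)) hboxes hdir_boxes
  exact ⟨i, iUnion₂_subset hi⟩

theorem stmt_10_general {X : Type*} [TopologicalSpace X]
    (𝒦 : Set (KSat X)) (h𝒦 : @IsCompact _ (upperVietorisTop X) 𝒦) :
    IsCompact (satur (⋃ L ∈ 𝒦, (L : KSat X).1)) ∧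
      satur (satur (⋃ L ∈ 𝒦, (L : KSat X).1)) = satur (⋃ L ∈ 𝒦, (L : KSat X).1) ∧
      IsCompact (⋃ L ∈ 𝒦, (L : KSat X).1) :=
  have hunion := IsCompact.biUnion_of_upperVietoris h𝒦
  ⟨hunion.satur, satur_satur _, hunion⟩

/-- If `𝒦` is a compact subset of `K_-(X)` with the upper Vietoris topology,
then `sat(⋃𝒦)` is compact and saturated in `X`; in particular `⋃𝒦` is compact. -/
theorem stmt_10 {X : Type*} [TopologicalSpace X]
    (K : Set X) (hK : IsCompact K) (hKsat : satur K = K)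
    (𝒦 : Set (KSat X)) (h𝒦 : @IsCompact _ (upperVietorisTop X) 𝒦) :
    IsCompact (satur (⋃ L ∈ 𝒦, (L : KSat X).1)) ∧
      satur (satur (⋃ L ∈ 𝒦, (L : KSat X).1)) = satur (⋃ L ∈ 𝒦, (L : KSat X).1) ∧
      IsCompact (⋃ L ∈ 𝒦, (L : KSat X).1) :=
  stmt_10_general 𝒦 h𝒦
end
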